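/- Let C = {x ∈ ℝⁿ : ⟨a_p, x⟩ ≤ b_p, p = 1,…,r} be a polyhedral convex set (given by finitely many affine inequalities with a_p ∈ ℝⁿ, b_p ∈ ℝ), let x⁰ ∈ C and u ∈ ℝⁿ. Then T²(C; x⁰, u) = T(T(C; x⁰); u). -/

import Mathlib

/-!
The inclusion `T²(C; x⁰, u) ⊆ T(T(C; x⁰); u)` holds for every convex `C`: if
`x⁰ + t u + (t²/2) v ∈ C`, then by convexity `u + (t/2) v` is a tangent direction at `x⁰`.
For the converse, a polyhedron is locally described by its active constraints: the tangent
cone lies in the half-space `⟪a_p, ·⟫ ≤ 0` of every active constraint `p`, so a direction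
`v ∈ T(T(C; x⁰); u)` satisfies `⟪a_p, u⟫ ≤ 0`, and `⟪a_p, v⟫ ≤ 0` whenever moreover
`⟪a_p, u⟫ = 0`. These sign conditions make the parabola `s ↦ x⁰ + s u + (s²/2) v` stay in
every half-space for all small `s > 0`, so `v ∈ T²(C; x⁰, u)` with a constant sequence.
-/

open Filter Topology Set
open scoped InnerProductSpace

noncomputable section

/-- The (first-order) tangent cone `T(C; x⁰)`. -/
def tcone {n : ℕ} (C : Set (EuclideanSpace ℝ (Fin n)))
    (x0 : EuclideanSpace ℝ (Fin n)) : Set (EuclideanSpace ℝ (Fin n)) :=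
  {d | ∃ t : ℕ → ℝ, ∃ dk : ℕ → EuclideanSpace ℝ (Fin n),
    (∀ k, 0 < t k) ∧ Tendsto t atTop (𝓝 0) ∧ Tendsto dk atTop (𝓝 d) ∧
    ∀ k, x0 + t k • dk k ∈ C}

/-- The second-order tangent set `T²(C; x⁰, u)`. -/
def tcone2 {n : ℕ} (C : Set (EuclideanSpace ℝ (Fin n)))
    (x0 u : EuclideanSpace ℝ (Fin n)) : Set (EuclideanSpace ℝ (Fin n)) :=
  {v | ∃ t : ℕ → ℝ, ∃ vk : ℕ → EuclideanSpace ℝ (Fin n),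
    (∀ k, 0 < t k) ∧ Tendsto t atTop (𝓝 0) ∧ Tendsto vk atTop (𝓝 v) ∧
    ∀ k, x0 + t k • u + ((1 / 2) * (t k) ^ 2) • vk k ∈ C}

lemma exists_seq_pos_tendsto_zero_forall {P : ℝ → Prop} (h : ∀ᶠ s in 𝓝[>] 0, P s) :
    ∃ t : ℕ → ℝ, (∀ k, 0 < t k) ∧ Tendsto t atTop (𝓝 0) ∧ ∀ k, P (t k) := by
  obtain ⟨t, ht, htP⟩ :=
    exists_seq_forall_of_frequently ((h.and self_mem_nhdsWithin).frequently)
  exact ⟨t, fun k => (htP k).2, tendsto_nhds_of_tendsto_nhdsWithin ht, fun k => (htP k).1⟩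

lemma eventually_add_mul_add_mul_sq_le {α β μ ν : ℝ} (hα : α ≤ β) (hμ : α = β → μ ≤ 0)
    (hν : α = β → μ = 0 → ν ≤ 0) :
    ∀ᶠ s in 𝓝[>] 0, α + s * μ + (1 / 2 * s ^ 2) * ν ≤ β := by
  rcases hα.lt_or_eq with hlt | rfl
  · have hcont : Tendsto (fun s : ℝ => α + s * μ + (1 / 2 * s ^ 2) * ν) (𝓝[>] 0) (𝓝 α) := by
      apply tendsto_nhdsWithin_of_tendsto_nhds
      simpa using (Continuous.tendsto (by fun_prop) (0 : ℝ) :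
        Tendsto (fun s : ℝ => α + s * μ + (1 / 2 * s ^ 2) * ν) (𝓝 0) _)
    filter_upwards [hcont.eventually_lt_const hlt] with s hs using hs.le
  rcases (hμ rfl).lt_or_eq with hμneg | hμzero
  · have hcont : Tendsto (fun s : ℝ => μ + s / 2 * ν) (𝓝[>] 0) (𝓝 μ) := by
      apply tendsto_nhdsWithin_of_tendsto_nhds
      simpa using (Continuous.tendsto (by fun_prop) (0 : ℝ) :
        Tendsto (fun s : ℝ => μ + s / 2 * ν) (𝓝 0) _)
    filter_upwards [hcont.eventually_lt_const hμneg, self_mem_nhdsWithin] with s hs (hs0 : 0 < s)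
    nlinarith
  · have hν' := hν rfl hμzero
    subst hμzero
    filter_upwards with s
    nlinarith [mul_nonpos_of_nonneg_of_nonpos (sq_nonneg s) hν']

section TangentCones

variable {n : ℕ} {C : Set (EuclideanSpace ℝ (Fin n))} {x0 d u v : EuclideanSpace ℝ (Fin n)}

lemma mem_tcone_of_eventually (h : ∀ᶠ s in 𝓝[>] (0 : ℝ), x0 + s • d ∈ C) : d ∈ tcone C x0 := by
  obtain ⟨t, ht, ht0, hmem⟩ := exists_seq_pos_tendsto_zero_forall h
  exact ⟨t, fun _ => d, ht, ht0, tendsto_const_nhds, hmem⟩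

lemma mem_tcone2_of_eventually
    (h : ∀ᶠ s in 𝓝[>] (0 : ℝ), x0 + s • u + ((1 / 2) * s ^ 2) • v ∈ C) : v ∈ tcone2 C x0 u := by
  obtain ⟨t, ht, ht0, hmem⟩ := exists_seq_pos_tendsto_zero_forall h
  exact ⟨t, fun _ => v, ht, ht0, tendsto_const_nhds, hmem⟩

lemma mem_closure_of_mem_tcone (hd : d ∈ tcone C x0) : x0 ∈ closure C := by
  obtain ⟨t, dk, -, ht0, hdk, hmem⟩ := hd
  have hlim : Tendsto (fun k => x0 + t k • dk k) atTop (𝓝 (x0 + (0 : ℝ) • d)) :=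
    tendsto_const_nhds.add (ht0.smul hdk)
  exact mem_closure_of_tendsto (by simpa using hlim) (Eventually.of_forall hmem)

lemma Convex.mem_tcone_of_add_smul_mem (hC : Convex ℝ C) (hx0 : x0 ∈ C) {t : ℝ} (ht : 0 < t)
    (hd : x0 + t • d ∈ C) : d ∈ tcone C x0 := by
  refine mem_tcone_of_eventually ?_
  filter_upwards [Ioo_mem_nhdsGT ht] with s hs
  have hst : s / t ∈ Icc (0 : ℝ) 1 :=
    ⟨(div_pos hs.1 ht).le, (div_le_one ht).2 hs.2.le⟩
  simpa [smul_smul, div_mul_cancel₀ s ht.ne'] using hC.add_smul_mem hx0 hd hst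

lemma Convex.tcone2_subset_tcone_tcone (hC : Convex ℝ C) (hx0 : x0 ∈ C) :
    tcone2 C x0 u ⊆ tcone (tcone C x0) u := by
  rintro v ⟨t, vk, ht, ht0, hvk, hmem⟩
  refine ⟨fun k => t k / 2, vk, fun k => half_pos (ht k), by simpa using ht0.div_const 2, hvk,
    fun k => hC.mem_tcone_of_add_smul_mem hx0 (ht k) ?_⟩
  convert hmem k using 1
  rw [smul_add, smul_smul, ← add_assoc]
  congr 2
  ring

lemma inner_nonpos_of_mem_tcone {a : EuclideanSpace ℝ (Fin n)} {β : ℝ}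
    (hC : C ⊆ {x | ⟪a, x⟫_ℝ ≤ β}) (hx0 : ⟪a, x0⟫_ℝ = β) (hd : d ∈ tcone C x0) :
    ⟪a, d⟫_ℝ ≤ 0 := by
  obtain ⟨t, dk, ht, -, hdk, hmem⟩ := hd
  have hdk_nonpos : ∀ k, ⟪a, dk k⟫_ℝ ≤ 0 := fun k => by
    have := hC (hmem k)
    simp only [mem_ofPred_eq, inner_add_right, real_inner_smul_right, hx0] at this
    exact nonpos_of_mul_nonpos_right (by linarith) (ht k)
  exact le_of_tendsto ((continuous_const.inner continuous_id).tendsto d |>.comp hdk)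
    (Eventually.of_forall hdk_nonpos)

end TangentCones

section Polyhedron

variable {n r : ℕ} (a : Fin r → EuclideanSpace ℝ (Fin n)) (b : Fin r → ℝ)

lemma convex_polyhedron : Convex ℝ {x : EuclideanSpace ℝ (Fin n) | ∀ p, ⟪a p, x⟫_ℝ ≤ b p} := by
  simp only [ofPred_forall]
  exact convex_iInter fun p => convex_halfSpace_le (innerₛₗ ℝ (a p)).isLinear (b p)

variable {a b} {x0 u : EuclideanSpace ℝ (Fin n)}

lemma tcone_tcone_subset_tcone2_polyhedron
    (hx0 : x0 ∈ {x : EuclideanSpace ℝ (Fin n) | ∀ p, ⟪a p, x⟫_ℝ ≤ b p}) :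
    tcone (tcone {x | ∀ p, ⟪a p, x⟫_ℝ ≤ b p} x0) u ⊆ tcone2 {x | ∀ p, ⟪a p, x⟫_ℝ ≤ b p} x0 u := by
  intro v hv
  have hT : ∀ p, ⟪a p, x0⟫_ℝ = b p →
      tcone {x | ∀ p, ⟪a p, x⟫_ℝ ≤ b p} x0 ⊆ {d | ⟪a p, d⟫_ℝ ≤ 0} := fun p hp _ hd =>
    inner_nonpos_of_mem_tcone (ofPred_subset_ofPred.2 fun _ hx => hx p) hp hd
  have hu_nonpos : ∀ p, ⟪a p, x0⟫_ℝ = b p → ⟪a p, u⟫_ℝ ≤ 0 := fun p hp =>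
    closure_minimal (hT p hp) (isClosed_le (by fun_prop) continuous_const)
      (mem_closure_of_mem_tcone hv)
  have hv_nonpos : ∀ p, ⟪a p, x0⟫_ℝ = b p → ⟪a p, u⟫_ℝ = 0 → ⟪a p, v⟫_ℝ ≤ 0 := fun p hp hpu =>
    inner_nonpos_of_mem_tcone (hT p hp) hpu hv
  refine mem_tcone2_of_eventually ?_
  filter_upwards [eventually_all.2 fun p =>
    eventually_add_mul_add_mul_sq_le (hx0 p) (hu_nonpos p) (hv_nonpos p)] with s hs p
  simpa only [inner_add_right, real_inner_smul_right] using hs p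

end Polyhedron

/-- For a polyhedral convex set `C`: `T²(C; x⁰, u) = T(T(C; x⁰); u)`. -/
theorem stmt_9 {n r : ℕ} (a : Fin r → EuclideanSpace ℝ (Fin n)) (b : Fin r → ℝ)
    (C : Set (EuclideanSpace ℝ (Fin n)))
    (hC : C = {x | ∀ p : Fin r, ⟪a p, x⟫_ℝ ≤ b p})
    (x0 : EuclideanSpace ℝ (Fin n)) (hx0 : x0 ∈ C)
    (u : EuclideanSpace ℝ (Fin n)) :
    tcone2 C x0 u = tcone (tcone C x0) u := by
  subst hC
  exact subset_antisymm ((convex_polyhedron a b).tcone2_subset_tcone_tcone hx0)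
    (tcone_tcone_subset_tcone2_polyhedron hx0)
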